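/- For c ≥ 7, the counts e_p(c,b) satisfy the recursion e_p(c,b) = e_p(c−2,b) + 2·e_p(c−4,b−2). -/

import Mathlib

open Classical

/-- The number of sign changes in a finite sequence of integers. -/
def signChanges (l : List ℤ) : ℕ :=
  ((l.zip l.tail).filter (fun p => p.1 * p.2 < 0)).length

/-- The sum of the absolute values of the entries. -/
def absSum (l : List ℤ) : ℕ := (l.map Int.natAbs).sum

/-- An even continued fraction representation: a nonempty even-length
sequence of nonzero integers. -/
def IsECF (l : List ℤ) : Prop :=
  l ≠ [] ∧ Even l.length ∧ ∀ x ∈ l, x ≠ 0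

/-- Palindromic or anti-palindromic sequences. -/
def IsPalOrAnti (l : List ℤ) : Prop :=
  l.reverse = l ∨ l.reverse = l.map (fun x => -x)

/-- The set `E(c)` of even continued fractions with crossing number `c`. -/
def Ecross (c : ℕ) : Set (List ℤ) :=
  {l | IsECF l ∧ (2 * absSum l : ℤ) - signChanges l = c}

/-- The set `E(c,b)` of even continued fractions with crossing number `c`
and braid index `b`. -/
def Eset (c b : ℕ) : Set (List ℤ) :=
  {l | IsECF l ∧ (2 * absSum l : ℤ) - signChanges l = c ∧
    (absSum l : ℤ) - signChanges l + 1 = b}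

noncomputable def e (c b : ℕ) : ℕ := (Eset c b).ncard

noncomputable def eTot (c : ℕ) : ℕ := (Ecross c).ncard

noncomputable def ep (c b : ℕ) : ℕ := (Eset c b ∩ {l | IsPalOrAnti l}).ncard

noncomputable def epTot (c : ℕ) : ℕ := (Ecross c ∩ {l | IsPalOrAnti l}).ncard

/-!
Split `E_p(c + 4, b + 2)`, `c ≥ 1`, according to the first entry `x` of a sequence
`x :: m ++ [±x]`. If `|x| ≥ 2`, moving both end entries one step towards zero lands in `E_p(c, b)`:
the absolute sum drops by 2 and the sign changes are untouched. If `|x| = 1`, then `m` is nonempty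
and the sequence is `m` with `ε · sign` of its end entries attached at both ends, `ε = ±1`. For
`ε = 1` this creates no sign change and `m ∈ E_p(c, b)`; for `ε = -1` it creates two and
`m ∈ E_p(c + 2, b + 2)`. The three operations are injective with disjoint images.
-/

def succAbs (x : ℤ) : ℤ := x + x.sign

lemma sign_succAbs (x : ℤ) : (succAbs x).sign = x.sign := by
  rcases lt_trichotomy x 0 with h | rfl | h
  · rw [succAbs, Int.sign_eq_neg_one_of_neg h, Int.sign_eq_neg_one_of_neg (by omega)]
  · rfl
  · rw [succAbs, Int.sign_eq_one_of_pos h, Int.sign_eq_one_of_pos (by omega)]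

lemma succAbs_eq_zero {x : ℤ} : succAbs x = 0 ↔ x = 0 := by
  rw [← Int.sign_eq_zero_iff_zero, sign_succAbs, Int.sign_eq_zero_iff_zero]

lemma natAbs_succAbs {x : ℤ} (hx : x ≠ 0) : (succAbs x).natAbs = x.natAbs + 1 := by
  rcases hx.lt_or_gt with h | h
  · rw [succAbs, Int.sign_eq_neg_one_of_neg h]; omega
  · rw [succAbs, Int.sign_eq_one_of_pos h]; omega

lemma natAbs_succAbs_ne_one (x : ℤ) : (succAbs x).natAbs ≠ 1 := by
  rcases eq_or_ne x 0 with rfl | hx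
  · decide
  · rw [natAbs_succAbs hx]; omega

lemma succAbs_neg (x : ℤ) : succAbs (-x) = -succAbs x := by
  rw [succAbs, succAbs, Int.sign_neg]; ring

lemma succAbs_sub_sign {x : ℤ} (hx : x.natAbs ≠ 1) : succAbs (x - x.sign) = x := by
  rcases lt_trichotomy x 0 with h | rfl | h
  · rw [succAbs, Int.sign_eq_neg_one_of_neg h, Int.sign_eq_neg_one_of_neg (by omega)]; ring
  · rfl
  · rw [succAbs, Int.sign_eq_one_of_pos h, Int.sign_eq_one_of_pos (by omega)]; ring

lemma succAbs_injective : Function.Injective succAbs := by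
  intro x y h
  have hs : x.sign = y.sign := by rw [← sign_succAbs, h, sign_succAbs]
  rw [succAbs, succAbs, hs] at h
  exact add_right_cancel h

lemma sign_mul_sign_self {x : ℤ} (hx : x ≠ 0) : x.sign * x.sign = 1 := by
  rcases hx.lt_or_gt with h | h
  · rw [Int.sign_eq_neg_one_of_neg h]; rfl
  · rw [Int.sign_eq_one_of_pos h]; rfl

lemma signChanges_cons_cons (a b : ℤ) (l : List ℤ) :
    signChanges (a :: b :: l) = (if a * b < 0 then 1 else 0) + signChanges (b :: l) := by
  by_cases h : a * b < 0 <;> simp [signChanges, h, Nat.add_comm]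

lemma signChanges_cons (a : ℤ) {l : List ℤ} (hl : l ≠ []) :
    signChanges (a :: l) = (if a * l.headI < 0 then 1 else 0) + signChanges l := by
  obtain ⟨b, l, rfl⟩ := List.exists_cons_of_ne_nil hl
  exact signChanges_cons_cons a b l

lemma signChanges_append_pair (l : List ℤ) (y z : ℤ) :
    signChanges (l ++ [y, z]) = signChanges (l ++ [y]) + if y * z < 0 then 1 else 0 := by
  induction l with
  | nil => by_cases h : y * z < 0 <;> simp [signChanges, h]
  | cons a l ih =>
    have hhead : (l ++ [y, z]).headI = (l ++ [y]).headI := by cases l <;> rfl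
    rw [List.cons_append, List.cons_append, signChanges_cons a (by simp),
      signChanges_cons a (by simp), hhead, ih, Nat.add_assoc]

-- Lemmas named `*_frame` are about lists of the form `x :: m ++ [y]`.
lemma signChanges_frame (u v x y : ℤ) (m : List ℤ) :
    signChanges (u :: (x :: m ++ [y]) ++ [v]) =
      (if u * x < 0 then 1 else 0) + signChanges (x :: m ++ [y]) + if y * v < 0 then 1 else 0 := by
  rw [List.cons_append, signChanges_cons u (by simp), List.append_assoc, List.singleton_append,
    signChanges_append_pair (x :: m), Nat.add_assoc]
  rfl

lemma signChanges_map_sign (l : List ℤ) : signChanges (l.map Int.sign) = signChanges l := by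
  simp only [signChanges, ← List.map_tail, List.zip_map, List.filter_map, List.length_map]
  congr 2
  funext p
  simp [← Int.sign_mul, Int.sign_neg_iff]

lemma signChanges_le_length_sub_one (l : List ℤ) : signChanges l ≤ l.length - 1 :=
  (List.length_filter_le _ _).trans (by simp)

lemma absSum_cons (x : ℤ) (l : List ℤ) : absSum (x :: l) = x.natAbs + absSum l := by
  simp [absSum]

lemma absSum_frame (x y : ℤ) (m : List ℤ) :
    absSum (x :: m ++ [y]) = x.natAbs + absSum m + y.natAbs := by
  simp [absSum, Nat.add_assoc]

lemma length_le_absSum {l : List ℤ} (h : ∀ x ∈ l, x ≠ 0) : l.length ≤ absSum l := by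
  induction l with
  | nil => simp [absSum]
  | cons a l ih =>
    have ha : a ≠ 0 := h a List.mem_cons_self
    rw [absSum_cons, List.length_cons]
    have := ih fun x hx => h x (List.mem_cons_of_mem a hx)
    omega

lemma natAbs_le_absSum {l : List ℤ} {x : ℤ} (hx : x ∈ l) : x.natAbs ≤ absSum l :=
  List.single_le_sum (fun _ _ => Nat.zero_le _) _ (List.mem_map_of_mem hx)

lemma List.exists_eq_cons_append_singleton {α : Type*} {l : List α} (h : 2 ≤ l.length) :
    ∃ x m y, l = x :: m ++ [y] := by
  obtain ⟨x, t, rfl⟩ :=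
    List.exists_cons_of_ne_nil (List.ne_nil_of_length_pos (l := l) (by omega))
  have ht : t ≠ [] := List.ne_nil_of_length_pos (by simp only [List.length_cons] at h; omega)
  exact ⟨x, t.dropLast, t.getLast ht, by simp [List.dropLast_append_getLast ht]⟩

lemma reverse_frame_eq_iff {α : Type*} (x y : α) (m : List α) :
    (x :: m ++ [y]).reverse = x :: m ++ [y] ↔ y = x ∧ m.reverse = m := by
  simp +contextual

lemma reverse_frame_eq_map_neg_iff {α : Type*} [InvolutiveNeg α] (x y : α) (m : List α) :
    (x :: m ++ [y]).reverse = (x :: m ++ [y]).map (- ·) ↔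
      y = -x ∧ m.reverse = m.map (- ·) := by
  simp +contextual

lemma isPalOrAnti_frame_iff (x y : ℤ) (m : List ℤ) :
    IsPalOrAnti (x :: m ++ [y]) ↔
      y = x ∧ m.reverse = m ∨ y = -x ∧ m.reverse = m.map (- ·) := by
  rw [IsPalOrAnti, reverse_frame_eq_iff, reverse_frame_eq_map_neg_iff]

lemma isECF_frame_iff (x y : ℤ) (m : List ℤ) :
    IsECF (x :: m ++ [y]) ↔ x ≠ 0 ∧ y ≠ 0 ∧ Even m.length ∧ ∀ z ∈ m, z ≠ 0 := by
  simp only [IsECF, List.cons_append, ne_eq, reduceCtorEq, not_false_eq_true, List.length_cons,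
    List.length_append, List.length_nil, zero_add, Nat.even_add_one, Nat.not_even_iff_odd,
    Nat.not_odd_iff_even, List.mem_cons, List.mem_append, List.not_mem_nil, or_false, or_imp,
    forall_and, forall_eq, true_and]
  tauto

lemma IsECF.two_le_length {l : List ℤ} (h : IsECF l) : 2 ≤ l.length := by
  obtain ⟨hne, ⟨k, hk⟩, -⟩ := h
  have := List.length_pos_of_ne_nil hne
  omega

lemma IsECF.exists_frame {l : List ℤ} (h : IsECF l) : ∃ x m y, l = x :: m ++ [y] :=
  List.exists_eq_cons_append_singleton h.two_le_length

def Epal (c b : ℕ) : Set (List ℤ) := Eset c b ∩ {l | IsPalOrAnti l}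

lemma mem_Epal {c b : ℕ} {l : List ℤ} :
    l ∈ Epal c b ↔ IsECF l ∧ IsPalOrAnti l ∧
      (2 * absSum l : ℤ) - signChanges l = c ∧ (absSum l : ℤ) - signChanges l + 1 = b := by
  simp only [Epal, Eset, Set.mem_inter_iff, Set.mem_ofPred_eq]
  tauto

lemma absSum_le_of_mem_Eset {c b : ℕ} {l : List ℤ} (h : l ∈ Eset c b) : absSum l ≤ c := by
  obtain ⟨⟨-, -, hz⟩, hc, -⟩ := h
  have := length_le_absSum hz
  have := signChanges_le_length_sub_one l
  omega

lemma two_le_of_mem_Eset {c b : ℕ} {l : List ℤ} (h : l ∈ Eset c b) : 2 ≤ b := by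
  obtain ⟨hl, -, hb⟩ := h
  have := length_le_absSum hl.2.2
  have := signChanges_le_length_sub_one l
  have := hl.two_le_length
  omega

lemma Eset_finite (c b : ℕ) : (Eset c b).Finite := by
  refine (((List.finite_length_le (Set.Icc (-c : ℤ) c) c).image
    (List.map Subtype.val)).subset fun l hl => ?_)
  have hbound : ∀ x ∈ l, x ∈ Set.Icc (-c : ℤ) c := fun x hx => by
    have := (natAbs_le_absSum hx).trans (absSum_le_of_mem_Eset hl)
    constructor <;> omega
  lift l to List (Set.Icc (-c : ℤ) c) using hbound
  refine ⟨l, ?_, rfl⟩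
  simpa using (length_le_absSum hl.1.2.2).trans (absSum_le_of_mem_Eset hl)

lemma mem_Epal_add_four_iff {l l' : List ℤ} {c b s : ℕ} (hE : IsECF l' ↔ IsECF l)
    (hP : IsPalOrAnti l' ↔ IsPalOrAnti l) (hA : IsECF l → absSum l' = absSum l + 2)
    (hS : IsECF l → signChanges l' = signChanges l + s) :
    l' ∈ Epal (c + 4) (b + 2) ↔ l ∈ Epal (c + s) (b + s) := by
  simp only [mem_Epal, hE, hP]
  refine and_congr_right fun hl => and_congr_right fun _ => ?_
  rw [hA hl, hS hl]
  push_cast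
  omega

lemma Epal_finite (c b : ℕ) : (Epal c b).Finite :=
  (Eset_finite c b).subset Set.inter_subset_left

lemma Epal_subset_two_le_length {c b : ℕ} : Epal c b ⊆ {l | 2 ≤ l.length} :=
  fun _ hl => (mem_Epal.1 hl).1.two_le_length

lemma ep_eq_zero_of_lt_two {c b : ℕ} (hb : b < 2) : ep c b = 0 := by
  have hempty : Epal c b = ∅ :=
    Set.eq_empty_of_forall_notMem fun _ hl => absurd (two_le_of_mem_Eset hl.1) (by omega)
  show (Epal c b).ncard = 0
  rw [hempty, Set.ncard_empty]

def bumpEnds (l : List ℤ) : List ℤ := (l.modifyHead succAbs).modifyLast succAbs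

lemma bumpEnds_frame (x y : ℤ) (m : List ℤ) :
    bumpEnds (x :: m ++ [y]) = succAbs x :: m ++ [succAbs y] := by
  rw [bumpEnds, List.cons_append, List.modifyHead_cons, ← List.cons_append,
    List.modifyLast_concat]

lemma bumpEnds_injOn : Set.InjOn bumpEnds {l | 2 ≤ l.length} := by
  intro l hl l' hl' h
  obtain ⟨x, m, y, rfl⟩ := List.exists_eq_cons_append_singleton hl
  obtain ⟨x', m', y', rfl⟩ := List.exists_eq_cons_append_singleton hl'
  rw [bumpEnds_frame, bumpEnds_frame] at h
  simpa [succAbs_injective.eq_iff] using h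

lemma bumpEnds_sub_sign {x y : ℤ} (hx : x.natAbs ≠ 1) (hy : y.natAbs ≠ 1) (m : List ℤ) :
    bumpEnds ((x - x.sign) :: m ++ [y - y.sign]) = x :: m ++ [y] := by
  rw [bumpEnds_frame, succAbs_sub_sign hx, succAbs_sub_sign hy]

lemma bumpEnds_frame_mem_Epal_iff {c b : ℕ} (x y : ℤ) (m : List ℤ) :
    bumpEnds (x :: m ++ [y]) ∈ Epal (c + 4) (b + 2) ↔ x :: m ++ [y] ∈ Epal c b := by
  rw [bumpEnds_frame]
  refine mem_Epal_add_four_iff (s := 0) ?_ ?_ (fun h => ?_) (fun _ => ?_)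
  · simp only [isECF_frame_iff, ne_eq, succAbs_eq_zero]
  · rw [isPalOrAnti_frame_iff, isPalOrAnti_frame_iff, ← succAbs_neg, succAbs_injective.eq_iff,
      succAbs_injective.eq_iff]
  · obtain ⟨hx, hy, -⟩ := (isECF_frame_iff ..).1 h
    rw [absSum_frame, absSum_frame, natAbs_succAbs hx, natAbs_succAbs hy]
    ring
  · rw [← signChanges_map_sign, ← signChanges_map_sign (x :: m ++ [y])]
    simp [sign_succAbs]

def wrap (ε : ℤ) (l : List ℤ) : List ℤ :=
  ε * l.headI.sign :: l ++ [ε * (l.getLastD 0).sign]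

lemma wrap_frame (ε x y : ℤ) (m : List ℤ) :
    wrap ε (x :: m ++ [y]) = ε * x.sign :: (x :: m ++ [y]) ++ [ε * y.sign] := by
  unfold wrap
  rw [List.getLastD_concat]
  rfl

lemma wrap_injective (ε : ℤ) : Function.Injective (wrap ε) := fun _ _ h =>
  (List.append_inj' (List.cons.inj h).2 rfl).1

lemma wrap_one_ne_wrap_neg_one {l l' : List ℤ} (hl : l.headI ≠ 0) :
    wrap 1 l ≠ wrap (-1) l' := by
  intro h
  obtain ⟨hhead, htail⟩ := List.cons.inj h
  obtain rfl := (List.append_inj' htail rfl).1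
  exact hl (Int.sign_eq_zero_iff_zero.1 (by linarith))

lemma isECF_wrap_frame_iff {ε : ℤ} (hε : ε ≠ 0) (x y : ℤ) (m : List ℤ) :
    IsECF (wrap ε (x :: m ++ [y])) ↔ IsECF (x :: m ++ [y]) := by
  rw [wrap_frame, isECF_frame_iff, isECF_frame_iff]
  simp +contextual [hε, Nat.even_add_one, or_imp, forall_and]

lemma isPalOrAnti_wrap_frame_iff (ε x y : ℤ) (m : List ℤ) :
    IsPalOrAnti (wrap ε (x :: m ++ [y])) ↔ IsPalOrAnti (x :: m ++ [y]) := by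
  rw [wrap_frame, isPalOrAnti_frame_iff, IsPalOrAnti]
  constructor
  · rintro (⟨-, h⟩ | ⟨-, h⟩)
    exacts [Or.inl h, Or.inr h]
  · rintro (h | h)
    · exact Or.inl ⟨by rw [((reverse_frame_eq_iff ..).1 h).1], h⟩
    · exact Or.inr ⟨by rw [((reverse_frame_eq_map_neg_iff ..).1 h).1, Int.sign_neg]; ring, h⟩

lemma absSum_wrap_frame {ε x y : ℤ} {m : List ℤ} (hε : ε.natAbs = 1)
    (h : IsECF (x :: m ++ [y])) :
    absSum (wrap ε (x :: m ++ [y])) = absSum (x :: m ++ [y]) + 2 := by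
  obtain ⟨hx, hy, -⟩ := (isECF_frame_iff ..).1 h
  rw [wrap_frame, absSum_frame, Int.natAbs_mul, Int.natAbs_mul, hε,
    Int.natAbs_sign_of_ne_zero hx, Int.natAbs_sign_of_ne_zero hy]
  ring

lemma signChanges_wrap_frame (ε : ℤ) {x y : ℤ} {m : List ℤ} (h : IsECF (x :: m ++ [y])) :
    signChanges (wrap ε (x :: m ++ [y])) =
      signChanges (x :: m ++ [y]) + if ε < 0 then 2 else 0 := by
  obtain ⟨hx, hy, -⟩ := (isECF_frame_iff ..).1 h
  have hx' : ε * x.sign * x < 0 ↔ ε < 0 := by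
    rw [mul_assoc, Int.sign_mul_self]
    simpa only [not_le] using (mul_nonneg_iff_of_pos_right (by positivity)).not
  have hy' : y * (ε * y.sign) < 0 ↔ ε < 0 := by
    rw [mul_left_comm, Int.mul_sign_self]
    simpa only [not_le] using (mul_nonneg_iff_of_pos_right (by positivity)).not
  simp only [wrap_frame, signChanges_frame, hx', hy']
  split_ifs <;> ring

lemma wrap_one_frame_mem_Epal_iff {c b : ℕ} (x y : ℤ) (m : List ℤ) :
    wrap 1 (x :: m ++ [y]) ∈ Epal (c + 4) (b + 2) ↔ x :: m ++ [y] ∈ Epal c b :=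
  mem_Epal_add_four_iff (s := 0) (isECF_wrap_frame_iff one_ne_zero ..)
    (isPalOrAnti_wrap_frame_iff ..)
    (absSum_wrap_frame rfl) (fun h => by rw [signChanges_wrap_frame _ h]; rfl)

lemma wrap_neg_one_frame_mem_Epal_iff {c b : ℕ} (x y : ℤ) (m : List ℤ) :
    wrap (-1) (x :: m ++ [y]) ∈ Epal (c + 4) (b + 2) ↔ x :: m ++ [y] ∈ Epal (c + 2) (b + 2) :=
  mem_Epal_add_four_iff (isECF_wrap_frame_iff (by decide) ..)
    (isPalOrAnti_wrap_frame_iff ..)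
    (absSum_wrap_frame rfl) (fun h => by rw [signChanges_wrap_frame _ h]; rfl)

lemma eq_wrap_of_isPalOrAnti {u v x y : ℤ} {m : List ℤ} (hx : x ≠ 0)
    (h : IsPalOrAnti (u :: (x :: m ++ [y]) ++ [v])) :
    u :: (x :: m ++ [y]) ++ [v] = wrap (u * x.sign) (x :: m ++ [y]) := by
  have hsx := sign_mul_sign_self hx
  have hv : v = u * x.sign * y.sign := by
    rcases (isPalOrAnti_frame_iff ..).1 h with ⟨rfl, hm⟩ | ⟨rfl, hm⟩
    · rw [((reverse_frame_eq_iff ..).1 hm).1, mul_assoc, hsx, mul_one]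
    · rw [((reverse_frame_eq_map_neg_iff ..).1 hm).1, Int.sign_neg, mul_neg, mul_assoc, hsx,
        mul_one]
  rw [wrap_frame, mul_assoc u, hsx, mul_one, hv]

lemma mem_image_of_mem_Epal_add_four {c b : ℕ} (hc : 1 ≤ c) {l : List ℤ}
    (hl : l ∈ Epal (c + 4) (b + 2)) :
    l ∈ bumpEnds '' Epal c b ∪ wrap 1 '' Epal c b ∪ wrap (-1) '' Epal (c + 2) (b + 2) := by
  obtain ⟨hE, hP, hcross, -⟩ := mem_Epal.1 hl
  obtain ⟨u, k, v, rfl⟩ := hE.exists_frame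
  obtain ⟨hu, -, hk, hk0⟩ := (isECF_frame_iff ..).1 hE
  have hvu : v.natAbs = u.natAbs := by
    rcases (isPalOrAnti_frame_iff ..).1 hP with ⟨rfl, -⟩ | ⟨rfl, -⟩ <;> simp
  by_cases hu1 : u.natAbs = 1
  · -- `[u, v]` with `|u| = |v| = 1` has crossing number at most 4.
    have hk_ne : k ≠ [] := by
      rintro rfl
      rw [absSum_frame, hvu, hu1] at hcross
      have : absSum ([] : List ℤ) = 0 := rfl
      omega
    obtain ⟨x, m, y, rfl⟩ := List.exists_eq_cons_append_singleton (l := k) (by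
      obtain ⟨j, hj⟩ := hk
      have := List.length_pos_of_ne_nil hk_ne
      omega)
    have hx : x ≠ 0 := hk0 x List.mem_cons_self
    rw [eq_wrap_of_isPalOrAnti hx hP] at hl ⊢
    have hε : (u * x.sign).natAbs = 1 := by
      rw [Int.natAbs_mul, hu1, Int.natAbs_sign_of_ne_zero hx]
    rcases Int.natAbs_eq_iff.1 hε with hε | hε <;> rw [hε] at hl ⊢
    · exact Or.inl (Or.inr ⟨_, (wrap_one_frame_mem_Epal_iff ..).1 hl, rfl⟩)
    · exact Or.inr ⟨_, (wrap_neg_one_frame_mem_Epal_iff ..).1 hl, rfl⟩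
  · rw [← bumpEnds_sub_sign hu1 (hvu ▸ hu1)] at hl ⊢
    exact Or.inl (Or.inl ⟨_, (bumpEnds_frame_mem_Epal_iff ..).1 hl, rfl⟩)

lemma Epal_add_four_eq {c b : ℕ} (hc : 1 ≤ c) :
    Epal (c + 4) (b + 2) =
      bumpEnds '' Epal c b ∪ wrap 1 '' Epal c b ∪ wrap (-1) '' Epal (c + 2) (b + 2) := by
  refine Set.Subset.antisymm (fun l hl => mem_image_of_mem_Epal_add_four hc hl) ?_
  rintro _ ((⟨l, hl, rfl⟩ | ⟨l, hl, rfl⟩) | ⟨l, hl, rfl⟩) <;>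
    obtain ⟨x, m, y, rfl⟩ := (mem_Epal.1 hl).1.exists_frame
  · exact (bumpEnds_frame_mem_Epal_iff ..).2 hl
  · exact (wrap_one_frame_mem_Epal_iff ..).2 hl
  · exact (wrap_neg_one_frame_mem_Epal_iff ..).2 hl

lemma disjoint_image_bumpEnds_image_wrap {ε : ℤ} (hε : ε.natAbs = 1) (c b c' b' : ℕ) :
    Disjoint (bumpEnds '' Epal c b) (wrap ε '' Epal c' b') := by
  rw [Set.disjoint_left]
  rintro _ ⟨l, hl, rfl⟩ ⟨l', hl', h⟩
  obtain ⟨x, m, y, rfl⟩ := (mem_Epal.1 hl).1.exists_frame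
  obtain ⟨x', m', y', rfl⟩ := (mem_Epal.1 hl').1.exists_frame
  rw [bumpEnds_frame, wrap_frame] at h
  have hhead : ε * x'.sign = succAbs x := congrArg List.headI h
  apply natAbs_succAbs_ne_one x
  rw [← hhead, Int.natAbs_mul, hε,
    Int.natAbs_sign_of_ne_zero ((isECF_frame_iff ..).1 (mem_Epal.1 hl').1).1]

lemma disjoint_image_wrap_one_image_wrap_neg_one (c b c' b' : ℕ) :
    Disjoint (wrap 1 '' Epal c b) (wrap (-1) '' Epal c' b') := by
  rw [Set.disjoint_left]
  rintro _ ⟨l, hl, rfl⟩ ⟨l', -, h⟩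
  obtain ⟨x, m, y, rfl⟩ := (mem_Epal.1 hl).1.exists_frame
  exact wrap_one_ne_wrap_neg_one (l := x :: m ++ [y]) ((isECF_frame_iff ..).1 (mem_Epal.1 hl).1).1
    h.symm

lemma ep_add_four {c : ℕ} (b : ℕ) (hc : 1 ≤ c) :
    ep (c + 4) (b + 2) = ep (c + 2) (b + 2) + 2 * ep c b := by
  have hfin (f : List ℤ → List ℤ) (c b : ℕ) : (f '' Epal c b).Finite :=
    (Epal_finite c b).image f
  show (Epal _ _).ncard = (Epal _ _).ncard + 2 * (Epal _ _).ncard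
  rw [Epal_add_four_eq hc,
    Set.ncard_union_eq (Set.disjoint_union_left.2 ⟨disjoint_image_bumpEnds_image_wrap rfl ..,
      disjoint_image_wrap_one_image_wrap_neg_one ..⟩)
      ((hfin _ _ _).union (hfin _ _ _)) (hfin _ _ _),
    Set.ncard_union_eq (disjoint_image_bumpEnds_image_wrap rfl ..) (hfin _ _ _) (hfin _ _ _),
    (bumpEnds_injOn.mono Epal_subset_two_le_length).ncard_image,
    (wrap_injective 1).injOn.ncard_image, (wrap_injective (-1)).injOn.ncard_image]
  ring

theorem ep_recursion (c b : ℕ) (hc : 7 ≤ c) :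
    ep c b = ep (c - 2) b + 2 * ep (c - 4) (b - 2) := by
  obtain ⟨c, rfl⟩ : ∃ c', c = c' + 4 := ⟨c - 4, by omega⟩
  rw [show c + 4 - 2 = c + 2 by omega, Nat.add_sub_cancel]
  rcases Nat.lt_or_ge b 2 with hb | hb
  · rw [ep_eq_zero_of_lt_two hb, ep_eq_zero_of_lt_two hb,
      ep_eq_zero_of_lt_two (by omega : b - 2 < 2)]
  · obtain ⟨b, rfl⟩ : ∃ b', b = b' + 2 := ⟨b - 2, by omega⟩
    rw [Nat.add_sub_cancel, ep_add_four b (by omega)]
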